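/- arXiv:1810.11008 — 2 statements merged into one kernel-verified Lean document; each statement's English description precedes it below -/
import Mathlib

section
/- Let eta be in C^r[0,1] and set H := P(eta). Assume the superapproximation property: there is a constant C_0, independent of h, such that ||P_0[(1 + eta)xi] - (1 + eta)xi|| <= C_0 h ||xi|| for all xi in S_{h,0}. Then there is a constant C, independent of h, such that ||P_0[(1 + H)xi] - (1 + H)xi|| <= C h ||xi|| for all xi in S_{h,0}. -/
open MeasureTheory Set

noncomputable section

/-- The L²(0,1) inner product. -/
def ip (f g : ℝ → ℝ) : ℝ := ∫ x in (0:ℝ)..1, f x * g x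

/-- The L²(0,1) norm. -/
def L2 (f : ℝ → ℝ) : ℝ := Real.sqrt (ip f f)

/-- The L^∞(0,1) norm. -/
def Linf (f : ℝ → ℝ) : ℝ := sSup ((fun x => |f x|) '' Icc (0:ℝ) 1)

/-- The H^s(0,1) Sobolev norm. -/
def Hs (s : ℕ) (f : ℝ → ℝ) : ℝ :=
  Real.sqrt (∑ j ∈ Finset.range (s + 1), (L2 (iteratedDeriv j f)) ^ 2)

/-- The W^{s,∞}(0,1) norm. -/
def Winf (s : ℕ) (f : ℝ → ℝ) : ℝ := ∑ j ∈ Finset.range (s + 1), Linf (iteratedDeriv j f)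

/-- A quasiuniform partition of [0,1] with maximal mesh length `h` and
quasiuniformity constant `c`. -/
structure Disc (c : ℝ) where
  N : ℕ
  pt : Fin (N + 2) → ℝ
  h : ℝ
  h_pos : 0 < h
  mono : StrictMono pt
  left : pt 0 = 0
  right : pt (Fin.last (N + 1)) = 1
  len_le : ∀ i : Fin (N + 1), pt i.succ - pt i.castSucc ≤ h
  quasi : ∀ i : Fin (N + 1), c * h ≤ pt i.succ - pt i.castSucc

/-- The finite element space S_h of C^μ piecewise polynomials of degree ≤ r-1. -/
def Sp (r μ : ℕ) {c : ℝ} (D : Disc c) : Set (ℝ → ℝ) :=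
  {φ | ContDiffOn ℝ μ φ (Icc 0 1) ∧
    ∀ i : Fin (D.N + 1), ∃ p : Polynomial ℝ, p.natDegree ≤ r - 1 ∧
      ∀ t ∈ Icc (D.pt i.castSucc) (D.pt i.succ), φ t = p.eval t}

/-- The finite element space S_{h,0} with zero boundary conditions. -/
def Sp0 (r μ : ℕ) {c : ℝ} (D : Disc c) : Set (ℝ → ℝ) :=
  {φ | φ ∈ Sp r μ D ∧ φ 0 = 0 ∧ φ 1 = 0}

/-- `P` is the L²(0,1)-orthogonal projection onto `S`. -/
def IsL2Proj (S : Set (ℝ → ℝ)) (P : (ℝ → ℝ) → (ℝ → ℝ)) : Prop :=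
  (∀ v, P v ∈ S) ∧ (∀ v χ, χ ∈ S → ip (fun x => v x - P v x) χ = 0) ∧
  (∀ χ ∈ S, P χ = χ)

/-- The projection bounds (2.3a)-(2.3c). -/
def ProjBounds (P : (ℝ → ℝ) → (ℝ → ℝ)) (r : ℕ) (h Cp : ℝ) : Prop :=
  (∀ v, DifferentiableOn ℝ v (Icc 0 1) → Hs 1 (P v) ≤ Cp * Hs 1 v) ∧
  (∀ v, ContinuousOn v (Icc 0 1) → Linf (P v) ≤ Cp * Linf v) ∧
  (∀ v, ContDiffOn ℝ r v (Icc 0 1) → Linf (fun x => P v x - v x) ≤ Cp * h ^ r * Winf r v)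

/-- The projection bounds (2.3a)-(2.3c) for functions vanishing at the endpoints. -/
def ProjBounds0 (P0 : (ℝ → ℝ) → (ℝ → ℝ)) (r : ℕ) (h Cp : ℝ) : Prop :=
  (∀ v, DifferentiableOn ℝ v (Icc 0 1) → v 0 = 0 → v 1 = 0 → Hs 1 (P0 v) ≤ Cp * Hs 1 v) ∧
  (∀ v, ContinuousOn v (Icc 0 1) → v 0 = 0 → v 1 = 0 → Linf (P0 v) ≤ Cp * Linf v) ∧
  (∀ v, ContDiffOn ℝ r v (Icc 0 1) → v 0 = 0 → v 1 = 0 →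
      Linf (fun x => P0 v x - v x) ≤ Cp * h ^ r * Winf r v)

/-- The approximation property (2.1a). -/
def ApproxProp (S : Set (ℝ → ℝ)) (r : ℕ) (h Ca : ℝ) : Prop :=
  ∀ s : ℕ, 2 ≤ s → s ≤ r → ∀ w : ℝ → ℝ, ContDiffOn ℝ s w (Icc 0 1) →
    ∃ χ ∈ S, L2 (fun x => w x - χ x) + h * L2 (fun x => deriv w x - deriv χ x)
      ≤ Ca * h ^ s * L2 (iteratedDeriv s w)

/-- The approximation property (2.1a) for functions vanishing at the endpoints. -/
def ApproxProp0 (S : Set (ℝ → ℝ)) (r : ℕ) (h Ca : ℝ) : Prop :=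
  ∀ s : ℕ, 2 ≤ s → s ≤ r → ∀ w : ℝ → ℝ, ContDiffOn ℝ s w (Icc 0 1) → w 0 = 0 → w 1 = 0 →
    ∃ χ ∈ S, L2 (fun x => w x - χ x) + h * L2 (fun x => deriv w x - deriv χ x)
      ≤ Ca * h ^ s * L2 (iteratedDeriv s w)

/-- The inverse inequalities (2.2). -/
def InvIneq (S : Set (ℝ → ℝ)) (μ : ℕ) (h Ci : ℝ) : Prop :=
  ∀ χ ∈ S,
    (∀ a b : ℕ, b ≤ a → a ≤ μ + 1 → Hs a χ ≤ Ci / h ^ (a - b) * Hs b χ) ∧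
    (∀ j : ℕ, j ≤ μ → Winf j χ ≤ Ci / (h ^ j * Real.sqrt h) * L2 χ)

/-- `(η, u)` is a (sufficiently) smooth solution of the shallow water system on
`[0,1] × [0,T]`, with `1 + η ≥ α` there and homogeneous Dirichlet conditions on `u`. -/
def SWSolution (T α : ℝ) (η u : ℝ → ℝ → ℝ) : Prop :=
  ContDiff ℝ (⊤ : ℕ∞) (Function.uncurry η) ∧ ContDiff ℝ (⊤ : ℕ∞) (Function.uncurry u) ∧
  (∀ t ∈ Icc (0:ℝ) T, ∀ x ∈ Icc (0:ℝ) 1,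
      deriv (fun s => η s x) t + deriv (fun y => u t y + η t y * u t y) x = 0) ∧
  (∀ t ∈ Icc (0:ℝ) T, ∀ x ∈ Icc (0:ℝ) 1,
      deriv (fun s => u s x) t + deriv (fun y => η t y) x
        + u t x * deriv (fun y => u t y) x = 0) ∧
  (∀ t ∈ Icc (0:ℝ) T, u t 0 = 0 ∧ u t 1 = 0) ∧
  (∀ t ∈ Icc (0:ℝ) T, ∀ x ∈ Icc (0:ℝ) 1, α ≤ 1 + η t x)

/-- The RK4 coefficients a_j. -/
def aRK : ℕ → ℝ
  | 1 => 1/2 | 2 => 1/2 | 3 => 1 | _ => 0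

/-- The RK4 coefficients b_j. -/
def bRK : ℕ → ℝ
  | 1 => 1/6 | 2 => 1/3 | 3 => 1/3 | 4 => 1/6 | _ => 0

/-- Φ = W + V·W for a pair of stages (V, W). -/
def PhiOf (VW : (ℝ → ℝ) × (ℝ → ℝ)) : ℝ → ℝ := fun x => VW.2 x + VW.1 x * VW.2 x

/-- F = V_x + W·W_x for a pair of stages (V, W). -/
def FOf (VW : (ℝ → ℝ) × (ℝ → ℝ)) : ℝ → ℝ := fun x => deriv VW.1 x + VW.2 x * deriv VW.2 x

/-- The RK4 intermediate stages (V^{n,j}, W^{n,j}) starting from (Hn, Un). -/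
def RKstage (P P0 : (ℝ → ℝ) → (ℝ → ℝ)) (k : ℝ) (Hn Un : ℝ → ℝ) : ℕ → (ℝ → ℝ) × (ℝ → ℝ)
  | 0 => (Hn, Un)
  | j + 1 =>
      ((fun x => Hn x - k * aRK (j + 1) * P (deriv (PhiOf (RKstage P P0 k Hn Un j))) x),
       (fun x => Un x - k * aRK (j + 1) * P0 (FOf (RKstage P P0 k Hn Un j)) x))

/-- One full RK4 time step. -/
def RKstep (P P0 : (ℝ → ℝ) → (ℝ → ℝ)) (k : ℝ) (HU : (ℝ → ℝ) × (ℝ → ℝ)) :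
    (ℝ → ℝ) × (ℝ → ℝ) :=
  ((fun x => HU.1 x - k * P (deriv (fun y =>
      ∑ j ∈ Finset.range 4, bRK (j + 1) * PhiOf (RKstage P P0 k HU.1 HU.2 j) y)) x),
   (fun x => HU.2 x - k * P0 (fun y =>
      ∑ j ∈ Finset.range 4, bRK (j + 1) * FOf (RKstage P P0 k HU.1 HU.2 j) y) x))

/-- The fully discrete RK4 solution (H_h^n, U_h^n). -/
def RKsol (P P0 : (ℝ → ℝ) → (ℝ → ℝ)) (k : ℝ) (H0 U0 : ℝ → ℝ) : ℕ → (ℝ → ℝ) × (ℝ → ℝ)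
  | 0 => (H0, U0)
  | n + 1 => RKstep P P0 k (RKsol P P0 k H0 U0 n)

/-- The spatial truncation error ψ = H_t + P[(U + HU)_x]. -/
def psiD (P P0 : (ℝ → ℝ) → (ℝ → ℝ)) (η u : ℝ → ℝ → ℝ) (t x : ℝ) : ℝ :=
  deriv (fun s => P (η s) x) t
    + P (deriv (fun y => P0 (u t) y + P (η t) y * P0 (u t) y)) x

/-- The spatial truncation error ζ = U_t + P_0[H_x + U U_x]. -/
def zetaD (P P0 : (ℝ → ℝ) → (ℝ → ℝ)) (η u : ℝ → ℝ → ℝ) (t x : ℝ) : ℝ :=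
  deriv (fun s => P0 (u s) x) t
    + P0 (fun y => deriv (P (η t)) y + P0 (u t) y * deriv (P0 (u t)) y) x

/-- The pairs (ρ^{n,j}, r^{n,j}), j = 0, 1, 2, 3, of Lemma 4.2. -/
def rhoPair (P P0 : (ℝ → ℝ) → (ℝ → ℝ)) (Hn Un eps e : ℝ → ℝ) : ℕ → (ℝ → ℝ) × (ℝ → ℝ)
  | 0 => ((fun x => (1 + Hn x) * e x + Un x * eps x), (fun x => eps x + Un x * e x))
  | j + 1 =>
      ((fun x => (1 + Hn x) * P0 (deriv (rhoPair P P0 Hn Un eps e j).2) x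
          + Un x * P (deriv (rhoPair P P0 Hn Un eps e j).1) x),
       (fun x => P (deriv (rhoPair P P0 Hn Un eps e j).1) x
          + Un x * P0 (deriv (rhoPair P P0 Hn Un eps e j).2) x))

/-- The pairs (ρ^{n,i}, r^{n,i}) for i = -1, 0, 1, 2, 3, where
ρ^{n,-1}(x) = ∫₀ˣ ε and r^{n,-1}(x) = ∫₀ˣ e. -/
def rhoPairZ (P P0 : (ℝ → ℝ) → (ℝ → ℝ)) (Hn Un eps e : ℝ → ℝ) (i : ℤ) :
    (ℝ → ℝ) × (ℝ → ℝ) :=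
  if i < 0 then ((fun x => ∫ t in (0:ℝ)..x, eps t), (fun x => ∫ t in (0:ℝ)..x, e t))
  else rhoPair P P0 Hn Un eps e i.toNat

/-- The quantity γ_i^{n,l} of Lemma 4.3 (with integer indices). -/
def gammaZ (P P0 : (ℝ → ℝ) → (ℝ → ℝ)) (Hn Un eps e : ℝ → ℝ) (i l : ℤ) : ℝ :=
  ip (fun x => deriv Un x * P (deriv (rhoPairZ P P0 Hn Un eps e i).1) x)
     (P (deriv (rhoPairZ P P0 Hn Un eps e l).1)) +
  ip (fun x => ((1 + Hn x) * deriv Un x - deriv Hn x * Un x)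
        * P0 (deriv (rhoPairZ P P0 Hn Un eps e i).2) x)
     (P0 (deriv (rhoPairZ P P0 Hn Un eps e l).2))

/-- The quantity γ_i^{n,l} of Lemma 4.3 (with natural number indices). -/
def gammaN (P P0 : (ℝ → ℝ) → (ℝ → ℝ)) (Hn Un eps e : ℝ → ℝ) (i l : ℕ) : ℝ :=
  ip (fun x => deriv Un x * P (deriv (rhoPair P P0 Hn Un eps e i).1) x)
     (P (deriv (rhoPair P P0 Hn Un eps e l).1)) +
  ip (fun x => ((1 + Hn x) * deriv Un x - deriv Hn x * Un x)
        * P0 (deriv (rhoPair P P0 Hn Un eps e i).2) x)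
     (P0 (deriv (rhoPair P P0 Hn Un eps e l).2))



section Helpers

lemma contInt {f g : ℝ → ℝ} (hf : ContinuousOn f (Icc 0 1)) (hg : ContinuousOn g (Icc 0 1)) :
    IntervalIntegrable (fun x => f x * g x) MeasureTheory.volume 0 1 :=
  ContinuousOn.intervalIntegrable (by rw [uIcc_of_le (zero_le_one)]; exact hf.mul hg)

lemma ip_self_nonneg (f : ℝ → ℝ) : 0 ≤ ip f f :=
  intervalIntegral.integral_nonneg zero_le_one fun x _ => mul_self_nonneg _

lemma L2_nonneg (f : ℝ → ℝ) : 0 ≤ L2 f := Real.sqrt_nonneg _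

lemma L2_sq (f : ℝ → ℝ) : L2 f ^ 2 = ip f f := Real.sq_sqrt (ip_self_nonneg f)

lemma ip_comm (f g : ℝ → ℝ) : ip f g = ip g f :=
  intervalIntegral.integral_congr fun x _ => mul_comm _ _

lemma ip_add_left {f g k : ℝ → ℝ} (hf : ContinuousOn f (Icc 0 1)) (hg : ContinuousOn g (Icc 0 1))
    (hk : ContinuousOn k (Icc 0 1)) : ip (fun x => f x + g x) k = ip f k + ip g k := by
  unfold ip
  rw [← intervalIntegral.integral_add (contInt hf hk) (contInt hg hk)]
  exact intervalIntegral.integral_congr fun x _ => by ring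

lemma ip_sub_left {f g k : ℝ → ℝ} (hf : ContinuousOn f (Icc 0 1)) (hg : ContinuousOn g (Icc 0 1))
    (hk : ContinuousOn k (Icc 0 1)) : ip (fun x => f x - g x) k = ip f k - ip g k := by
  unfold ip
  rw [← intervalIntegral.integral_sub (contInt hf hk) (contInt hg hk)]
  exact intervalIntegral.integral_congr fun x _ => by ring

lemma ip_cauchy {f g : ℝ → ℝ} (hf : ContinuousOn f (Icc 0 1)) (hg : ContinuousOn g (Icc 0 1)) :
    ip f g ≤ L2 f * L2 g := by
  have key : ∀ t : ℝ, 0 ≤ ip g g * (t * t) + (2 * ip f g) * t + ip f f := by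
    intro t
    have h1 := contInt hg hg
    have h2 := contInt hf hg
    have h3 := contInt hf hf
    have hnn : 0 ≤ ∫ x in (0:ℝ)..1,
        ((t * t) * (g x * g x) + (2 * t) * (f x * g x) + f x * f x) :=
      intervalIntegral.integral_nonneg zero_le_one
        (fun x _ => by nlinarith [sq_nonneg (t * g x + f x)])
    rw [intervalIntegral.integral_add ((h1.const_mul _).add (h2.const_mul _)) h3,
        intervalIntegral.integral_add (h1.const_mul _) (h2.const_mul _),
        intervalIntegral.integral_const_mul, intervalIntegral.integral_const_mul] at hnn
    unfold ip
    exact hnn.trans_eq (by ring)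
  have hd := discrim_le_zero key
  rw [discrim] at hd
  have h2 : ip f g ^ 2 ≤ ip f f * ip g g := by nlinarith
  calc ip f g ≤ |ip f g| := le_abs_self _
    _ = Real.sqrt (ip f g ^ 2) := (Real.sqrt_sq_eq_abs _).symm
    _ ≤ Real.sqrt (ip f f * ip g g) := Real.sqrt_le_sqrt h2
    _ = L2 f * L2 g := by rw [Real.sqrt_mul (ip_self_nonneg f)]; rfl

lemma L2_add_le {f g : ℝ → ℝ} (hf : ContinuousOn f (Icc 0 1)) (hg : ContinuousOn g (Icc 0 1)) :
    L2 (fun x => f x + g x) ≤ L2 f + L2 g := by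
  have e : ip (fun x => f x + g x) (fun x => f x + g x) = ip f f + 2 * ip f g + ip g g := by
    rw [ip_add_left (k := fun x => f x + g x) hf hg (hf.add hg), ip_comm f (fun x => f x + g x),
        ip_comm g (fun x => f x + g x), ip_add_left hf hg hf, ip_add_left hf hg hg,
        ip_comm g f]
    ring
  have h : ip (fun x => f x + g x) (fun x => f x + g x) ≤ (L2 f + L2 g) ^ 2 := by
    rw [e]; nlinarith [ip_cauchy hf hg, L2_sq f, L2_sq g]
  calc L2 (fun x => f x + g x) = Real.sqrt (ip (fun x => f x + g x) (fun x => f x + g x)) := rfl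
    _ ≤ Real.sqrt ((L2 f + L2 g) ^ 2) := Real.sqrt_le_sqrt h
    _ = L2 f + L2 g := Real.sqrt_sq (add_nonneg (L2_nonneg f) (L2_nonneg g))

lemma L2_le_of_bound {f g : ℝ → ℝ} {M : ℝ} (hf : ContinuousOn f (Icc 0 1))
    (hg : ContinuousOn g (Icc 0 1)) (hM : 0 ≤ M)
    (hb : ∀ x ∈ Icc (0:ℝ) 1, |f x| ≤ M * |g x|) : L2 f ≤ M * L2 g := by
  have h : ip f f ≤ M ^ 2 * ip g g := by
    have h1 : ip f f ≤ ∫ x in (0:ℝ)..1, M ^ 2 * (g x * g x) := by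
      apply intervalIntegral.integral_mono_on zero_le_one (contInt hf hf)
        ((contInt hg hg).const_mul _)
      intro x hx
      have h2 := hb x hx
      nlinarith [abs_mul_abs_self (f x), abs_mul_abs_self (g x), abs_nonneg (f x),
        abs_nonneg (g x)]
    rwa [intervalIntegral.integral_const_mul] at h1
  calc L2 f = Real.sqrt (ip f f) := rfl
    _ ≤ Real.sqrt (M ^ 2 * ip g g) := Real.sqrt_le_sqrt h
    _ = M * L2 g := by rw [Real.sqrt_mul (sq_nonneg M), Real.sqrt_sq hM]; rfl

lemma L2_neg (f : ℝ → ℝ) : L2 (fun x => -f x) = L2 f := by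
  unfold L2
  congr 1
  exact intervalIntegral.integral_congr fun x _ => by ring

lemma Sp0_sub {r μ : ℕ} {c : ℝ} {D : Disc c} {f g : ℝ → ℝ}
    (hf : f ∈ Sp0 r μ D) (hg : g ∈ Sp0 r μ D) : (fun x => f x - g x) ∈ Sp0 r μ D := by
  obtain ⟨⟨hf1, hf2⟩, hf0, hf1'⟩ := hf
  obtain ⟨⟨hg1, hg2⟩, hg0, hg1'⟩ := hg
  refine ⟨⟨hf1.sub hg1, fun i => ?_⟩, by simp [hf0, hg0], by simp [hf1', hg1']⟩
  obtain ⟨p, hp, hpe⟩ := hf2 i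
  obtain ⟨q, hq, hqe⟩ := hg2 i
  exact ⟨p - q, le_trans (Polynomial.natDegree_sub_le p q) (max_le hp hq),
    fun t ht => by simp [hpe t ht, hqe t ht]⟩

end Helpers

/-- Lemma 2.1 (i): superapproximation with `1 + H`, `H = Pη`, in place of `1 + η`. -/
theorem stmt0 (r μ : ℕ) (hr : 3 ≤ r) (hμ1 : 1 ≤ μ) (hμ2 : μ ≤ r - 2)
    (c Cp C0 : ℝ) (hc : 0 < c)
    (η : ℝ → ℝ) (hη : ContDiffOn ℝ r η (Icc (0:ℝ) 1)) :
    ∃ C : ℝ, ∀ (D : Disc c) (P P0 : (ℝ → ℝ) → (ℝ → ℝ)),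
      IsL2Proj (Sp r μ D) P → IsL2Proj (Sp0 r μ D) P0 →
      ProjBounds P r D.h Cp → ProjBounds0 P0 r D.h Cp →
      (∀ ξ ∈ Sp0 r μ D,
        L2 (fun x => P0 (fun y => (1 + η y) * ξ y) x - (1 + η x) * ξ x)
          ≤ C0 * D.h * L2 ξ) →
      ∀ ξ ∈ Sp0 r μ D,
        L2 (fun x => P0 (fun y => (1 + P η y) * ξ y) x - (1 + P η x) * ξ x)
          ≤ C * D.h * L2 ξ := by
  classical
  refine ⟨C0 + 2 * (max (Cp * Winf r η) 0 * (1 / c) ^ (r - 1)), ?_⟩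
  intro D P P0 hP hP0 hPb hP0b hsup ξ hξ
  have hηc : ContinuousOn η (Icc (0:ℝ) 1) := hη.continuousOn
  have hξc : ContinuousOn ξ (Icc (0:ℝ) 1) := hξ.1.1.continuousOn
  have hHc : ContinuousOn (P η) (Icc (0:ℝ) 1) := (hP.1 η).1.continuousOn
  set v1 : ℝ → ℝ := fun y => (1 + η y) * ξ y with hv1def
  set v2 : ℝ → ℝ := fun y => (P η y - η y) * ξ y with hv2def
  set v : ℝ → ℝ := fun y => (1 + P η y) * ξ y with hvdef
  have hv1c : ContinuousOn v1 (Icc (0:ℝ) 1) := (continuousOn_const.add hηc).mul hξc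
  have hv2c : ContinuousOn v2 (Icc (0:ℝ) 1) := (hHc.sub hηc).mul hξc
  have hvc : ContinuousOn v (Icc (0:ℝ) 1) := (continuousOn_const.add hHc).mul hξc
  have hPv1 : P0 v1 ∈ Sp0 r μ D := hP0.1 v1
  have hPv2 : P0 v2 ∈ Sp0 r μ D := hP0.1 v2
  have hPv : P0 v ∈ Sp0 r μ D := hP0.1 v
  have hPv1c : ContinuousOn (P0 v1) (Icc (0:ℝ) 1) := hPv1.1.1.continuousOn
  have hPv2c : ContinuousOn (P0 v2) (Icc (0:ℝ) 1) := hPv2.1.1.continuousOn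
  have hPvc : ContinuousOn (P0 v) (Icc (0:ℝ) 1) := hPv.1.1.continuousOn
  -- the defect d is orthogonal to Sp0 and lies in Sp0, hence has zero L² norm
  set d : ℝ → ℝ := fun x => P0 v x - P0 v1 x - P0 v2 x with hddef
  have hdmem : d ∈ Sp0 r μ D := Sp0_sub (Sp0_sub hPv hPv1) hPv2
  have hdc : ContinuousOn d (Icc (0:ℝ) 1) := hdmem.1.1.continuousOn
  have hL2d : L2 d = 0 := by
    have ho := hP0.2.1 v d hdmem
    have ho1 := hP0.2.1 v1 d hdmem
    have ho2 := hP0.2.1 v2 d hdmem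
    have e1 : ip (fun x => (v1 x - P0 v1 x) + (v2 x - P0 v2 x) - (v x - P0 v x)) d
        = ip d d := by
      refine intervalIntegral.integral_congr fun x _ => ?_
      have : (v1 x - P0 v1 x) + (v2 x - P0 v2 x) - (v x - P0 v x) = d x := by
        simp only [hv1def, hv2def, hvdef, hddef]; ring
      exact congrArg (fun z => z * d x) this
    have e2 : ip (fun x => (v1 x - P0 v1 x) + (v2 x - P0 v2 x) - (v x - P0 v x)) d
        = ip (fun x => (v1 x - P0 v1 x) + (v2 x - P0 v2 x)) d - ip (fun x => v x - P0 v x) d :=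
      ip_sub_left ((hv1c.sub hPv1c).add (hv2c.sub hPv2c)) (hvc.sub hPvc) hdc
    have e3 : ip (fun x => (v1 x - P0 v1 x) + (v2 x - P0 v2 x)) d
        = ip (fun x => v1 x - P0 v1 x) d + ip (fun x => v2 x - P0 v2 x) d :=
      ip_add_left (hv1c.sub hPv1c) (hv2c.sub hPv2c) hdc
    have hipd : ip d d = 0 := by rw [← e1, e2, e3, ho, ho1, ho2]; ring
    rw [L2, hipd, Real.sqrt_zero]
  -- bound on the η-piece from the superapproximation hypothesis
  have hE1 : L2 (fun x => P0 v1 x - v1 x) ≤ C0 * D.h * L2 ξ := hsup ξ hξ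
  -- L² bound for the projection of v2
  have hPle : L2 (P0 v2) ≤ L2 v2 := by
    have ho' := hP0.2.1 v2 (P0 v2) hPv2
    have e : ip v2 (P0 v2) - ip (P0 v2) (P0 v2) = 0 := by
      rw [← ip_sub_left hv2c hPv2c hPv2c]; exact ho'
    have hcs := ip_cauchy hv2c hPv2c
    nlinarith [L2_sq (P0 v2), L2_nonneg (P0 v2), L2_nonneg v2]
  -- sup-norm bound on Pη - η
  set M : ℝ := Linf (fun x => P η x - η x) with hMdef
  have hMnn : 0 ≤ M := by
    apply Real.sSup_nonneg
    rintro y ⟨x, hx, rfl⟩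
    exact abs_nonneg _
  have hMb : ∀ x ∈ Icc (0:ℝ) 1, |P η x - η x| ≤ M := by
    intro x hx
    have hbdd : BddAbove ((fun x => |P η x - η x|) '' Icc (0:ℝ) 1) :=
      (isCompact_Icc.image_of_continuousOn ((hHc.sub hηc).abs)).bddAbove
    exact le_csSup hbdd ⟨x, hx, rfl⟩
  have hMle : M ≤ Cp * D.h ^ r * Winf r η := hPb.2.2 η hη
  -- mesh bound h ≤ 1/c
  have hh1 : D.h ≤ 1 / c := by
    have h1 := D.quasi 0
    have h2 : D.pt (Fin.succ 0) ≤ 1 := by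
      rw [← D.right]; exact D.mono.monotone (Fin.le_last _)
    have h3 : (0:ℝ) ≤ D.pt (Fin.castSucc 0) := by
      rw [← D.left]; exact D.mono.monotone (Fin.zero_le _)
    rw [le_div_iff₀ hc]
    linarith
  have hhr : D.h ^ r ≤ (1 / c) ^ (r - 1) * D.h := by
    have hr1 : r - 1 + 1 = r := by omega
    calc D.h ^ r = D.h ^ (r - 1) * D.h := by rw [← pow_succ, hr1]
      _ ≤ (1 / c) ^ (r - 1) * D.h :=
        mul_le_mul_of_nonneg_right (pow_le_pow_left₀ D.h_pos.le hh1 _) D.h_pos.le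
  have hM2 : M ≤ max (Cp * Winf r η) 0 * ((1 / c) ^ (r - 1) * D.h) := by
    have h1 : M ≤ Cp * Winf r η * D.h ^ r := by
      calc M ≤ Cp * D.h ^ r * Winf r η := hMle
        _ = Cp * Winf r η * D.h ^ r := by ring
    have h2 : Cp * Winf r η * D.h ^ r ≤ max (Cp * Winf r η) 0 * D.h ^ r :=
      mul_le_mul_of_nonneg_right (le_max_left _ _) (pow_nonneg D.h_pos.le _)
    have h3 : max (Cp * Winf r η) 0 * D.h ^ r
        ≤ max (Cp * Winf r η) 0 * ((1 / c) ^ (r - 1) * D.h) :=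
      mul_le_mul_of_nonneg_left hhr (le_max_right _ _)
    linarith
  -- bound the v2-piece
  have hv2b : L2 v2 ≤ M * L2 ξ := by
    apply L2_le_of_bound hv2c hξc hMnn
    intro x hx
    have : |v2 x| = |P η x - η x| * |ξ x| := by rw [hv2def]; exact abs_mul _ _
    rw [this]
    exact mul_le_mul_of_nonneg_right (hMb x hx) (abs_nonneg _)
  have hE2 : L2 (fun x => P0 v2 x - v2 x) ≤ 2 * (M * L2 ξ) := by
    have ht : L2 (fun x => P0 v2 x - v2 x) ≤ L2 (P0 v2) + L2 v2 := by
      have := L2_add_le (g := fun x => -v2 x) hPv2c hv2c.neg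
      rw [L2_neg] at this
      exact le_of_eq_of_le (by congr 1) this
    linarith
  -- assemble
  have hsplit : L2 (fun x => P0 v x - v x)
      ≤ L2 (fun x => (P0 v1 x - v1 x) + (P0 v2 x - v2 x)) + L2 d := by
    have heq : (fun x => P0 v x - v x)
        = fun x => ((P0 v1 x - v1 x) + (P0 v2 x - v2 x)) + d x := by
      funext x
      simp only [hv1def, hv2def, hvdef, hddef]
      ring
    rw [heq]
    exact L2_add_le ((hPv1c.sub hv1c).add (hPv2c.sub hv2c)) hdc
  have htri : L2 (fun x => (P0 v1 x - v1 x) + (P0 v2 x - v2 x))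
      ≤ L2 (fun x => P0 v1 x - v1 x) + L2 (fun x => P0 v2 x - v2 x) :=
    L2_add_le (hPv1c.sub hv1c) (hPv2c.sub hv2c)
  have hL2ξ : 0 ≤ L2 ξ := L2_nonneg ξ
  have hfinal : L2 (fun x => P0 v x - v x)
      ≤ (C0 + 2 * (max (Cp * Winf r η) 0 * (1 / c) ^ (r - 1))) * D.h * L2 ξ := by
    have hb2 : 2 * (M * L2 ξ)
        ≤ 2 * (max (Cp * Winf r η) 0 * (1 / c) ^ (r - 1)) * D.h * L2 ξ := by
      have := mul_le_mul_of_nonneg_right hM2 hL2ξ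
      nlinarith
    rw [hL2d] at hsplit
    linarith
  exact le_of_eq_of_le (by congr 1) hfinal

end
end

section
/- For 0 <= i < j <= 3 the following identity holds: (P[(rho^{n,i})_x], (rho^{n,j})_x) + ((1 + H^n) P_0[(r^{n,i})_x], (r^{n,j})_x) = -((rho^{n,i+1})_x, P[(rho^{n,j-1})_x]) - ((1 + H^n)(r^{n,i+1})_x, P_0[(r^{n,j-1})_x]) + gamma_i^{n,j-1}. -/
open MeasureTheory Set

noncomputable section

lemma uIcc01 : Set.uIcc (0:ℝ) 1 = Set.Icc 0 1 := Set.uIcc_of_le zero_le_one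

lemma contOn_intervalIntegrable {f : ℝ → ℝ} (hf : ContinuousOn f (Icc 0 1)) :
    IntervalIntegrable f volume 0 1 :=
  ContinuousOn.intervalIntegrable (by rw [uIcc01]; exact hf)

lemma integral_congr_Ioo {f g : ℝ → ℝ} (h : ∀ x ∈ Ioo (0:ℝ) 1, f x = g x) :
    ∫ x in (0:ℝ)..1, f x = ∫ x in (0:ℝ)..1, g x := by
  apply intervalIntegral.integral_congr_ae
  have h1 : (volume : Measure ℝ) {(1:ℝ)} = 0 := Real.volume_singleton
  filter_upwards [MeasureTheory.measure_eq_zero_iff_ae_notMem.mp h1] with x hx hmem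
  rw [Set.uIoc_of_le zero_le_one] at hmem
  exact h x ⟨hmem.1, lt_of_le_of_ne hmem.2 (by simpa using hx)⟩

lemma c1_facts {f : ℝ → ℝ} (hf : ContDiffOn ℝ 1 f (Icc (0:ℝ) 1)) :
    ContinuousOn f (Icc 0 1) ∧ ContinuousOn (derivWithin f (Icc 0 1)) (Icc 0 1) ∧
      ∀ x ∈ Ioo (0:ℝ) 1, HasDerivAt f (derivWithin f (Icc 0 1) x) x := by
  refine ⟨hf.continuousOn, hf.continuousOn_derivWithin (uniqueDiffOn_Icc one_pos) le_rfl, ?_⟩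
  intro x hx
  have hn : Icc (0:ℝ) 1 ∈ nhds x := Icc_mem_nhds hx.1 hx.2
  have hd : DifferentiableAt ℝ f x :=
    ((hf.differentiableOn one_ne_zero) x (Ioo_subset_Icc_self hx)).differentiableAt hn
  rw [derivWithin_of_mem_nhds hn]
  exact hd.hasDerivAt

lemma key_ibp (u v du dv : ℝ → ℝ)
    (hu : ContinuousOn u (Icc 0 1)) (hv : ContinuousOn v (Icc 0 1))
    (hdu : ContinuousOn du (Icc 0 1)) (hdv : ContinuousOn dv (Icc 0 1))
    (hu' : ∀ x ∈ Ioo (0:ℝ) 1, HasDerivAt u (du x) x)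
    (hv' : ∀ x ∈ Ioo (0:ℝ) 1, HasDerivAt v (dv x) x)
    (hb0 : u 0 * v 0 = 0) (hb1 : u 1 * v 1 = 0) :
    ∫ x in (0:ℝ)..1, (du x * v x + u x * dv x) = 0 := by
  have h := intervalIntegral.integral_eq_sub_of_hasDeriv_right_of_le zero_le_one
    (hu.mul hv)
    (fun x hx => (((hu' x hx).mul (hv' x hx)).hasDerivWithinAt))
    (contOn_intervalIntegrable ((hdu.mul hv).add (hu.mul hdv)))
  rw [h, Pi.mul_apply, Pi.mul_apply, hb0, hb1, sub_zero]

/-- Lemma 4.3, identity (4.10), for 0 ≤ i < j ≤ 3. -/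
theorem stmt13 (r μ : ℕ) (hr : 3 ≤ r) (hμ1 : 1 ≤ μ) (hμ2 : μ ≤ r - 2)
    (c T α : ℝ) (hc : 0 < c) (hT : 0 < T) (hα : 0 < α)
    (η u : ℝ → ℝ → ℝ) (hsol : SWSolution T α η u) :
    ∀ (D : Disc c) (P P0 : (ℝ → ℝ) → (ℝ → ℝ)) (k : ℝ) (M : ℕ),
      IsL2Proj (Sp r μ D) P → IsL2Proj (Sp0 r μ D) P0 →
      0 < k → k * M = T →
      ∀ n : ℕ, n ≤ M → ∀ eps ∈ Sp r μ D, ∀ e ∈ Sp0 r μ D,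
      ∀ i j : ℕ, i < j → j ≤ 3 →
      let Hn := P (η ((n : ℝ) * k))
      let Un := P0 (u ((n : ℝ) * k))
      let rp := rhoPair P P0 Hn Un eps e
      ip (P (deriv (rp i).1)) (deriv (rp j).1)
          + ip (fun x => (1 + Hn x) * P0 (deriv (rp i).2) x) (deriv (rp j).2)
        = -(ip (deriv (rp (i + 1)).1) (P (deriv (rp (j - 1)).1)))
          - ip (fun x => (1 + Hn x) * deriv (rp (i + 1)).2 x) (P0 (deriv (rp (j - 1)).2))
          + gammaN P P0 Hn Un eps e i (j - 1) := by
  intro D P P0 k M hP hP0 hk hkM n hn eps heps e he i j hij hj3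
  intro Hn Un rp
  obtain ⟨l, rfl⟩ : ∃ l, j = l + 1 := ⟨j - 1, by omega⟩
  have hrp : rp = rhoPair P P0 Hn Un eps e := rfl
  rw [hrp]
  simp only [Nat.add_sub_cancel, gammaN, ip]
  set R := rhoPair P P0 Hn Un eps e with hRdef
  set F := P (deriv (R i).1) with hFdef
  set G := P0 (deriv (R i).2) with hGdef
  set Fl := P (deriv (R l).1) with hFldef
  set Gl := P0 (deriv (R l).2) with hGldef
  have hmHn : Hn ∈ Sp r μ D := hP.1 _
  have hmUn : Un ∈ Sp0 r μ D := hP0.1 _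
  have hmF : F ∈ Sp r μ D := hP.1 _
  have hmFl : Fl ∈ Sp r μ D := hP.1 _
  have hmG : G ∈ Sp0 r μ D := hP0.1 _
  have hmGl : Gl ∈ Sp0 r μ D := hP0.1 _
  have hU0 : Un 0 = 0 := hmUn.2.1
  have hU1 : Un 1 = 0 := hmUn.2.2
  have hG0 : G 0 = 0 := hmG.2.1
  have hG1 : G 1 = 0 := hmG.2.2
  have hGl0 : Gl 0 = 0 := hmGl.2.1
  have hGl1 : Gl 1 = 0 := hmGl.2.2
  have h1le : (1 : WithTop ℕ∞) ≤ (μ : ℕ) := by exact_mod_cast hμ1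
  obtain ⟨cHn, cDH, dHn⟩ := c1_facts (hmHn.1.of_le h1le)
  obtain ⟨cUn, cDU, dUn⟩ := c1_facts (hmUn.1.1.of_le h1le)
  obtain ⟨cF, cDF, dF⟩ := c1_facts (hmF.1.of_le h1le)
  obtain ⟨cG, cDG, dG⟩ := c1_facts (hmG.1.1.of_le h1le)
  obtain ⟨cFl, cDFl, dFl⟩ := c1_facts (hmFl.1.of_le h1le)
  obtain ⟨cGl, cDGl, dGl⟩ := c1_facts (hmGl.1.1.of_le h1le)
  set DH := derivWithin Hn (Icc (0:ℝ) 1) with hDHdef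
  set DU := derivWithin Un (Icc (0:ℝ) 1) with hDUdef
  set DF := derivWithin F (Icc (0:ℝ) 1) with hDFdef
  set DG := derivWithin G (Icc (0:ℝ) 1) with hDGdef
  set DFl := derivWithin Fl (Icc (0:ℝ) 1) with hDFldef
  set DGl := derivWithin Gl (Icc (0:ℝ) 1) with hDGldef
  -- derivative expansions at interior points
  have hdR1 : ∀ x ∈ Ioo (0:ℝ) 1, deriv (R (l+1)).1 x
      = DH x * Gl x + (1 + Hn x) * DGl x + (DU x * Fl x + Un x * DFl x) := by
    intro x hx
    rw [show (R (l+1)).1 = fun y => (1 + Hn y) * Gl y + Un y * Fl y from rfl]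
    exact ((((dHn x hx).const_add 1).mul (dGl x hx)).add ((dUn x hx).mul (dFl x hx))).deriv
  have hdR2 : ∀ x ∈ Ioo (0:ℝ) 1, deriv (R (l+1)).2 x
      = DFl x + (DU x * Gl x + Un x * DGl x) := by
    intro x hx
    rw [show (R (l+1)).2 = fun y => Fl y + Un y * Gl y from rfl]
    exact ((dFl x hx).add ((dUn x hx).mul (dGl x hx))).deriv
  have hdQ1 : ∀ x ∈ Ioo (0:ℝ) 1, deriv (R (i+1)).1 x
      = DH x * G x + (1 + Hn x) * DG x + (DU x * F x + Un x * DF x) := by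
    intro x hx
    rw [show (R (i+1)).1 = fun y => (1 + Hn y) * G y + Un y * F y from rfl]
    exact ((((dHn x hx).const_add 1).mul (dG x hx)).add ((dUn x hx).mul (dF x hx))).deriv
  have hdQ2 : ∀ x ∈ Ioo (0:ℝ) 1, deriv (R (i+1)).2 x
      = DF x + (DU x * G x + Un x * DG x) := by
    intro x hx
    rw [show (R (i+1)).2 = fun y => F y + Un y * G y from rfl]
    exact ((dF x hx).add ((dUn x hx).mul (dG x hx))).deriv
  -- replace all derivatives in the goal by their continuous versions
  have e1 : (∫ x in (0:ℝ)..1, F x * deriv (R (l+1)).1 x)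
      = ∫ x in (0:ℝ)..1, F x * (DH x * Gl x + (1 + Hn x) * DGl x + (DU x * Fl x + Un x * DFl x)) :=
    integral_congr_Ioo fun x hx => by rw [hdR1 x hx]
  have e2 : (∫ x in (0:ℝ)..1, (1 + Hn x) * G x * deriv (R (l+1)).2 x)
      = ∫ x in (0:ℝ)..1, (1 + Hn x) * G x * (DFl x + (DU x * Gl x + Un x * DGl x)) :=
    integral_congr_Ioo fun x hx => by rw [hdR2 x hx]
  have e3 : (∫ x in (0:ℝ)..1, deriv (R (i+1)).1 x * Fl x)
      = ∫ x in (0:ℝ)..1, (DH x * G x + (1 + Hn x) * DG x + (DU x * F x + Un x * DF x)) * Fl x :=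
    integral_congr_Ioo fun x hx => by rw [hdQ1 x hx]
  have e4 : (∫ x in (0:ℝ)..1, (1 + Hn x) * deriv (R (i+1)).2 x * Gl x)
      = ∫ x in (0:ℝ)..1, (1 + Hn x) * (DF x + (DU x * G x + Un x * DG x)) * Gl x :=
    integral_congr_Ioo fun x hx => by rw [hdQ2 x hx]
  have e5 : (∫ x in (0:ℝ)..1, deriv Un x * F x * Fl x)
      = ∫ x in (0:ℝ)..1, DU x * F x * Fl x :=
    integral_congr_Ioo fun x hx => by rw [(dUn x hx).deriv]
  have e6 : (∫ x in (0:ℝ)..1, ((1 + Hn x) * deriv Un x - deriv Hn x * Un x) * G x * Gl x)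
      = ∫ x in (0:ℝ)..1, ((1 + Hn x) * DU x - DH x * Un x) * G x * Gl x :=
    integral_congr_Ioo fun x hx => by rw [(dUn x hx).deriv, (dHn x hx).deriv]
  rw [e1, e2, e3, e4, e5, e6]
  -- integrability of all the nice integrands
  have i1 : IntervalIntegrable (fun x => F x * (DH x * Gl x + (1 + Hn x) * DGl x
      + (DU x * Fl x + Un x * DFl x))) volume 0 1 :=
    contOn_intervalIntegrable (by fun_prop)
  have i2 : IntervalIntegrable (fun x => (1 + Hn x) * G x * (DFl x + (DU x * Gl x + Un x * DGl x)))
      volume 0 1 := contOn_intervalIntegrable (by fun_prop)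
  have i3 : IntervalIntegrable (fun x => (DH x * G x + (1 + Hn x) * DG x
      + (DU x * F x + Un x * DF x)) * Fl x) volume 0 1 :=
    contOn_intervalIntegrable (by fun_prop)
  have i4 : IntervalIntegrable (fun x => (1 + Hn x) * (DF x + (DU x * G x + Un x * DG x)) * Gl x)
      volume 0 1 := contOn_intervalIntegrable (by fun_prop)
  have i5 : IntervalIntegrable (fun x => DU x * F x * Fl x) volume 0 1 :=
    contOn_intervalIntegrable (by fun_prop)
  have i6 : IntervalIntegrable (fun x => ((1 + Hn x) * DU x - DH x * Un x) * G x * Gl x)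
      volume 0 1 := contOn_intervalIntegrable (by fun_prop)
  have j1 : IntervalIntegrable (fun x => DF x * ((1 + Hn x) * Gl x + Un x * Fl x)
      + F x * (DH x * Gl x + (1 + Hn x) * DGl x + (DU x * Fl x + Un x * DFl x))) volume 0 1 :=
    contOn_intervalIntegrable (by fun_prop)
  have j2 : IntervalIntegrable (fun x => (DH x * G x + (1 + Hn x) * DG x) * (Fl x + Un x * Gl x)
      + (1 + Hn x) * G x * (DFl x + (DU x * Gl x + Un x * DGl x))) volume 0 1 :=
    contOn_intervalIntegrable (by fun_prop)
  -- the two integration-by-parts identities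
  have ibp1 : (∫ x in (0:ℝ)..1, (DF x * ((1 + Hn x) * Gl x + Un x * Fl x)
      + F x * (DH x * Gl x + (1 + Hn x) * DGl x + (DU x * Fl x + Un x * DFl x)))) = 0 :=
    key_ibp F (fun x => (1 + Hn x) * Gl x + Un x * Fl x) DF
      (fun x => DH x * Gl x + (1 + Hn x) * DGl x + (DU x * Fl x + Un x * DFl x))
      cF (by fun_prop) cDF (by fun_prop) dF
      (fun x hx => (((dHn x hx).const_add 1).mul (dGl x hx)).add ((dUn x hx).mul (dFl x hx)))
      (by simp [hGl0, hU0]) (by simp [hGl1, hU1])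
  have ibp2 : (∫ x in (0:ℝ)..1, ((DH x * G x + (1 + Hn x) * DG x) * (Fl x + Un x * Gl x)
      + (1 + Hn x) * G x * (DFl x + (DU x * Gl x + Un x * DGl x)))) = 0 :=
    key_ibp (fun x => (1 + Hn x) * G x) (fun x => Fl x + Un x * Gl x)
      (fun x => DH x * G x + (1 + Hn x) * DG x)
      (fun x => DFl x + (DU x * Gl x + Un x * DGl x))
      (by fun_prop) (by fun_prop) (by fun_prop) (by fun_prop)
      (fun x hx => ((dHn x hx).const_add 1).mul (dG x hx))
      (fun x hx => (dFl x hx).add ((dUn x hx).mul (dGl x hx)))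
      (by simp [hG0]) (by simp [hG1])
  have ibpsum : (∫ x in (0:ℝ)..1, ((DF x * ((1 + Hn x) * Gl x + Un x * Fl x)
      + F x * (DH x * Gl x + (1 + Hn x) * DGl x + (DU x * Fl x + Un x * DFl x)))
      + ((DH x * G x + (1 + Hn x) * DG x) * (Fl x + Un x * Gl x)
      + (1 + Hn x) * G x * (DFl x + (DU x * Gl x + Un x * DGl x))))) = 0 := by
    rw [intervalIntegral.integral_add j1 j2, ibp1, ibp2, add_zero]
  -- combine everything
  have hkey : (∫ x in (0:ℝ)..1, F x * (DH x * Gl x + (1 + Hn x) * DGl x + (DU x * Fl x + Un x * DFl x)))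
      + (∫ x in (0:ℝ)..1, (1 + Hn x) * G x * (DFl x + (DU x * Gl x + Un x * DGl x)))
      + (∫ x in (0:ℝ)..1, (DH x * G x + (1 + Hn x) * DG x + (DU x * F x + Un x * DF x)) * Fl x)
      + (∫ x in (0:ℝ)..1, (1 + Hn x) * (DF x + (DU x * G x + Un x * DG x)) * Gl x)
      - (∫ x in (0:ℝ)..1, DU x * F x * Fl x)
      - (∫ x in (0:ℝ)..1, ((1 + Hn x) * DU x - DH x * Un x) * G x * Gl x) = 0 := by
    rw [← intervalIntegral.integral_add i1 i2, ← intervalIntegral.integral_add (i1.add i2) i3,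
        ← intervalIntegral.integral_add ((i1.add i2).add i3) i4,
        ← intervalIntegral.integral_sub (((i1.add i2).add i3).add i4) i5,
        ← intervalIntegral.integral_sub ((((i1.add i2).add i3).add i4).sub i5) i6]
    refine Eq.trans ?_ ibpsum
    apply intervalIntegral.integral_congr
    intro x _
    dsimp only
    ring
  linarith [hkey]


end
end
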